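/- The free boundaries are ordered: for every z > z₀ and every w ≥ 0 satisfying erf(w·√(α₁/α₂)) = H(z), one has w < z. In particular, the coefficient ξ₂ determined from ξ₁ by erf(ξ₂·√(α₁/α₂)) = H(ξ₁) satisfies ξ₂ < ξ₁. -/

import Mathlib

noncomputable section

/-- The error function `erf x = (2/√π) ∫₀ˣ exp(−s²) ds`. -/
def erf (x : ℝ) : ℝ := (2 / Real.sqrt Real.pi) * ∫ s in (0:ℝ)..x, Real.exp (-(s^2))

/-- The complementary error function. -/
def erfc (x : ℝ) : ℝ := 1 - erf x

/-- Physical data of the three-phase Stefan problem: positive thermal conductivities,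
specific heats, mass density, latent heats, and temperatures `B > C > D`. -/
structure Params where
  k₁ : ℝ
  k₂ : ℝ
  k₃ : ℝ
  c₁ : ℝ
  c₂ : ℝ
  c₃ : ℝ
  ρ : ℝ
  ℓ₁ : ℝ
  ℓ₂ : ℝ
  B : ℝ
  C : ℝ
  D : ℝ
  hk₁ : 0 < k₁
  hk₂ : 0 < k₂
  hk₃ : 0 < k₃
  hc₁ : 0 < c₁
  hc₂ : 0 < c₂
  hc₃ : 0 < c₃
  hρ : 0 < ρ
  hℓ₁ : 0 < ℓ₁
  hℓ₂ : 0 < ℓ₂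
  hBC : C < B
  hCD : D < C

namespace Params

/-- Thermal diffusivity of phase 1. -/
def α₁ (p : Params) : ℝ := p.k₁ / (p.ρ * p.c₁)

/-- Thermal diffusivity of phase 2. -/
def α₂ (p : Params) : ℝ := p.k₂ / (p.ρ * p.c₂)

/-- Thermal diffusivity of phase 3. -/
def α₃ (p : Params) : ℝ := p.k₃ / (p.ρ * p.c₃)

/-- Stefan number `Ste₁ = c₁(C−D)/ℓ₁`. -/
def Ste₁ (p : Params) : ℝ := p.c₁ * (p.C - p.D) / p.ℓ₁

/-- Stefan number `Ste₂ = c₂(B−C)/ℓ₂`. -/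
def Ste₂ (p : Params) : ℝ := p.c₂ * (p.B - p.C) / p.ℓ₂

/-- `φ(z) = z + (Ste₁/√π) exp(−z²)/erfc(z)`. -/
def φ (p : Params) (z : ℝ) : ℝ :=
  z + (p.Ste₁ / Real.sqrt Real.pi) * Real.exp (-(z^2)) / erfc z

/-- `H(z) = erf(z√(α₁/α₂)) − (Ste₂/√π)(ℓ₂/ℓ₁)√(k₂c₁/(k₁c₂)) exp(−z²α₁/α₂)/φ(z)`. -/
def H (p : Params) (z : ℝ) : ℝ :=
  erf (z * Real.sqrt (p.α₁ / p.α₂)) -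
    (p.Ste₂ / Real.sqrt Real.pi) * (p.ℓ₂ / p.ℓ₁) *
      Real.sqrt (p.k₂ * p.c₁ / (p.k₁ * p.c₂)) *
      (Real.exp (-(z^2) * (p.α₁ / p.α₂)) / p.φ z)

/-- `Q(z) = (ℓ₁/ℓ₂) φ(z) exp(z² α₁/α₂)`. -/
def Q (p : Params) (z : ℝ) : ℝ :=
  (p.ℓ₁ / p.ℓ₂) * p.φ z * Real.exp (z^2 * (p.α₁ / p.α₂))

/-- The function `T` arising from the Robin (convective) boundary condition with
heat-transfer coefficient `h₀` and bulk temperature `Ainf`. -/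
def T (p : Params) (h₀ Ainf : ℝ) (z : ℝ) : ℝ :=
  (p.Ste₂ / (Real.sqrt Real.pi * p.c₂)) * ((Ainf - p.B) / (p.B - p.C)) *
    Real.sqrt (p.k₃ * p.c₁ * p.c₃ / p.k₁) *
    (Real.exp (-(z^2) * p.α₁ * (1 / p.α₃ - 1 / p.α₂)) /
      (p.k₃ / (h₀ * Real.sqrt (Real.pi * p.α₃)) + erf (z * Real.sqrt (p.α₁ / p.α₃)))) -
  z * Real.exp (z^2 * (p.α₁ / p.α₂))

/-- The function `V` arising from the Dirichlet boundary condition with temperature `A`. -/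
def V (p : Params) (A : ℝ) (z : ℝ) : ℝ :=
  ((A - p.B) / p.ℓ₂) * Real.sqrt (p.c₁ * p.c₃ * p.k₃ / (Real.pi * p.k₁)) *
    (Real.exp (-(z^2) * (p.α₁ / p.α₃ - p.α₁ / p.α₂)) / erf (z * Real.sqrt (p.α₁ / p.α₃))) -
  z * Real.exp (z^2 * (p.α₁ / p.α₂))

/-- The function `P` arising from the Neumann boundary condition with flux coefficient `q₀`. -/
def P (p : Params) (q₀ : ℝ) (z : ℝ) : ℝ :=
  Real.exp (z^2 * (p.α₁ / p.α₂)) *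
    (-z + (q₀ / p.ℓ₂) * Real.sqrt (p.c₁ / (p.ρ * p.k₁)) * Real.exp (-(z^2) * (p.α₁ / p.α₃)))

/-- Critical heat-transfer coefficient `h₂`. -/
def h2 (p : Params) (Ainf z₀ : ℝ) : ℝ :=
  ((p.B - p.C) / (Ainf - p.B)) *
    Real.sqrt (p.k₂ * p.k₃ * p.c₂ / (Real.pi * p.c₃ * p.α₃)) *
    (1 / erf (z₀ * Real.sqrt (p.α₁ / p.α₂)))

/-- Critical heat-flux coefficient `q₂`. -/
def q2 (p : Params) (z₀ : ℝ) : ℝ :=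
  p.k₂ * (p.B - p.C) / (Real.sqrt (p.α₂ * Real.pi) * erf (z₀ * Real.sqrt (p.α₁ / p.α₂)))

end Params

/-!
For `z ≥ 0` the term subtracted from `erf (z √(α₁/α₂))` in `H z` is positive, since `φ z > 0`
(because `erfc z > 0`). So `erf (w √(α₁/α₂)) = H z < erf (z √(α₁/α₂))`, and strict monotonicity
of `erf` gives `w < z`.
-/

open MeasureTheory Set

lemma integrable_exp_neg_sq : Integrable fun s : ℝ => Real.exp (-(s ^ 2)) := by
  simpa using integrable_exp_neg_mul_sq one_pos

lemma integral_exp_neg_sq_Ioi_zero :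
    ∫ s in Ioi (0 : ℝ), Real.exp (-(s ^ 2)) = Real.sqrt Real.pi / 2 := by
  simpa using integral_gaussian_Ioi 1

lemma integral_exp_neg_sq_Ioi_pos (x : ℝ) : 0 < ∫ s in Ioi x, Real.exp (-(s ^ 2)) := by
  have : NeZero (volume.restrict (Ioi x)) := ⟨by simp⟩
  exact integral_exp_pos integrable_exp_neg_sq.integrableOn

lemma erf_lt_one (x : ℝ) : erf x < 1 := by
  have hsplit := intervalIntegral.integral_interval_add_Ioi
    integrable_exp_neg_sq.integrableOn integrable_exp_neg_sq.integrableOn (a := 0) (b := x)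
  rw [integral_exp_neg_sq_Ioi_zero] at hsplit
  have hπ : 0 < Real.sqrt Real.pi := Real.sqrt_pos.2 Real.pi_pos
  calc erf x = (2 / Real.sqrt Real.pi) * ∫ s in (0 : ℝ)..x, Real.exp (-(s ^ 2)) := rfl
    _ < (2 / Real.sqrt Real.pi) * (Real.sqrt Real.pi / 2) := by
        gcongr
        linarith [integral_exp_neg_sq_Ioi_pos x]
    _ = 1 := by field_simp

lemma erfc_pos (x : ℝ) : 0 < erfc x := sub_pos.2 (erf_lt_one x)

lemma erf_strictMono : StrictMono erf := by
  intro a b hab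
  have hint (u v : ℝ) : IntervalIntegrable (fun s : ℝ => Real.exp (-(s ^ 2))) volume u v :=
    integrable_exp_neg_sq.intervalIntegrable
  have hsum := intervalIntegral.integral_add_adjacent_intervals (hint 0 a) (hint a b)
  have hpos : 0 < ∫ s in a..b, Real.exp (-(s ^ 2)) :=
    intervalIntegral.intervalIntegral_pos_of_pos (hint a b) (fun s => Real.exp_pos _) hab
  unfold erf
  gcongr
  linarith

namespace Params

variable (p : Params)

lemma Ste₁_pos : 0 < p.Ste₁ :=
  div_pos (mul_pos p.hc₁ (sub_pos.2 p.hCD)) p.hℓ₁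

lemma Ste₂_pos : 0 < p.Ste₂ :=
  div_pos (mul_pos p.hc₂ (sub_pos.2 p.hBC)) p.hℓ₂

lemma α₁_div_α₂_pos : 0 < p.α₁ / p.α₂ := by
  have := p.hk₁; have := p.hk₂; have := p.hc₁; have := p.hc₂; have := p.hρ
  unfold α₁ α₂
  positivity

lemma φ_pos {z : ℝ} (hz : 0 ≤ z) : 0 < p.φ z := by
  have := p.Ste₁_pos
  have := erfc_pos z
  unfold φ
  positivity

lemma H_lt_erf {z : ℝ} (hz : 0 ≤ z) : p.H z < erf (z * Real.sqrt (p.α₁ / p.α₂)) := by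
  have := p.Ste₂_pos; have := p.φ_pos hz
  have := p.hℓ₁; have := p.hℓ₂; have := p.hk₁; have := p.hk₂; have := p.hc₁; have := p.hc₂
  have hcorr : 0 < (p.Ste₂ / Real.sqrt Real.pi) * (p.ℓ₂ / p.ℓ₁) *
      Real.sqrt (p.k₂ * p.c₁ / (p.k₁ * p.c₂)) *
      (Real.exp (-(z ^ 2) * (p.α₁ / p.α₂)) / p.φ z) := by
    have := Real.sqrt_pos.2 Real.pi_pos
    have := Real.sqrt_pos.2 (show 0 < p.k₂ * p.c₁ / (p.k₁ * p.c₂) by positivity)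
    positivity
  unfold H
  linarith

end Params

/-- for every `z > z₀` and every `w ≥ 0` with `erf(w√(α₁/α₂)) = H(z)`,
one has `w < z`. -/
theorem free_boundaries_ordered (p : Params) (z₀ : ℝ)
    (hz₀ : 0 < z₀ ∧ p.H z₀ = 0) :
    ∀ z w : ℝ, z₀ < z → 0 ≤ w →
      erf (w * Real.sqrt (p.α₁ / p.α₂)) = p.H z → w < z := by
  intro z w hz _ herf
  have hlt : erf (w * Real.sqrt (p.α₁ / p.α₂)) < erf (z * Real.sqrt (p.α₁ / p.α₂)) :=
    herf ▸ p.H_lt_erf (hz₀.1.trans hz).le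
  exact (mul_lt_mul_iff_left₀ (Real.sqrt_pos.2 p.α₁_div_α₂_pos)).1
    (erf_strictMono.lt_iff_lt.1 hlt)
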